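/- arXiv:1501.05062 — 3 statements merged into one kernel-verified Lean document; each statement's English description precedes it below -/
import Mathlib

section
/- Refined Fatou lemma of Brezis–Lieb: Let 0 < p < ∞ and let (f_n) be a sequence of measurable functions from ℝ^d to ℂ such that limsup_{n→∞} ∫_{ℝ^d} |f_n(x)|^p dx < ∞ and f_n → f almost everywhere on ℝ^d. Then ∫_{ℝ^d} | |f_n(x)|^p − |f_n(x) − f(x)|^p − |f(x)|^p | dx → 0 as n → ∞. -/
/-!
For every `ε > 0` there is `C_ε` with `| ‖x‖^p - ‖x - y‖^p - ‖y‖^p | ≤ ε ‖x‖^p + C_ε ‖y‖^p`.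
Applied to `x = f n`, `y = F`, the part of the integrand exceeding `ε |f n|^p` is dominated by
`C_ε |F|^p`, which is integrable by Fatou, and it tends to `0` a.e.; by dominated convergence
`limsup ∫ | … | ≤ ε · limsup ∫ |f n|^p`, and `ε` is arbitrary.
-/

open MeasureTheory Filter ENNReal

open scoped NNReal Topology

namespace Real

theorem add_rpow_le_of_one_lt {p l x y : ℝ} (hp : 0 ≤ p) (hl : 1 < l) (hx : 0 ≤ x)
    (hy : 0 ≤ y) : (x + y) ^ p ≤ l ^ p * x ^ p + (l / (l - 1)) ^ p * y ^ p := by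
  have hl' : 0 < l - 1 := sub_pos.2 hl
  rcases le_or_gt y ((l - 1) * x) with hyx | hxy
  · calc (x + y) ^ p ≤ (l * x) ^ p := rpow_le_rpow (by positivity) (by linarith) hp
      _ = l ^ p * x ^ p := mul_rpow (by linarith) hx
      _ ≤ _ := le_add_of_nonneg_right (by positivity)
  · have hsum : x + y ≤ l / (l - 1) * y := by
      rw [div_mul_eq_mul_div, le_div_iff₀ hl']
      nlinarith
    calc (x + y) ^ p ≤ (l / (l - 1) * y) ^ p := rpow_le_rpow (by positivity) hsum hp
      _ = (l / (l - 1)) ^ p * y ^ p := mul_rpow (by positivity) hy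
      _ ≤ _ := le_add_of_nonneg_left (by positivity)

end Real

section NormRpow

variable {p : ℝ}

theorem exists_abs_norm_rpow_sub_norm_rpow_le {E : Type*} [SeminormedAddGroup E] (hp : 0 < p)
    {ε : ℝ} (hε : 0 < ε) :
    ∃ C : ℝ≥0, ∀ x y : E, |‖x‖ ^ p - ‖y‖ ^ p| ≤ ε * ‖x‖ ^ p + C * ‖x - y‖ ^ p := by
  set l := (1 + ε) ^ p⁻¹
  have hl : 1 < l := Real.one_lt_rpow (by linarith) (inv_pos.2 hp)
  have hlp : l ^ p = 1 + ε := by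
    rw [← Real.rpow_mul (by linarith), inv_mul_cancel₀ hp.ne', Real.rpow_one]
  set C : ℝ≥0 := ⟨(l / (l - 1)) ^ p, by positivity⟩
  have key : ∀ a t : ℝ, 0 ≤ a → 0 ≤ t → (a + t) ^ p ≤ (1 + ε) * a ^ p + C * t ^ p :=
    fun a t ha ht => hlp ▸ Real.add_rpow_le_of_one_lt hp.le hl ha ht
  refine ⟨C, fun x y => ?_⟩
  rcases le_total ‖x‖ ‖y‖ with h | h
  · have hy := (Real.rpow_le_rpow (norm_nonneg y) (norm_le_norm_add_norm_sub x y) hp.le).trans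
      (key _ _ (norm_nonneg x) (norm_nonneg (x - y)))
    have hxy := Real.rpow_le_rpow (norm_nonneg x) h hp.le
    rw [abs_of_nonpos (by linarith)]
    linarith
  · have hx := (Real.rpow_le_rpow (norm_nonneg x) (norm_le_norm_add_norm_sub' x y) hp.le).trans
      (key _ _ (norm_nonneg y) (norm_nonneg (x - y)))
    have hyx := Real.rpow_le_rpow (norm_nonneg y) h hp.le
    rw [abs_of_nonneg (by linarith)]
    linarith [mul_le_mul_of_nonneg_left hyx hε.le]

theorem exists_ofReal_abs_norm_rpow_sub_sub_le {E : Type*} [SeminormedAddCommGroup E]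
    (hp : 0 < p) {ε : ℝ≥0} (hε : 0 < ε) :
    ∃ C : ℝ≥0, ∀ x y : E,
      ENNReal.ofReal |‖x‖ ^ p - ‖x - y‖ ^ p - ‖y‖ ^ p| ≤ ε * ‖x‖ₑ ^ p + C * ‖y‖ₑ ^ p := by
  obtain ⟨C, hC⟩ := exists_abs_norm_rpow_sub_norm_rpow_le (E := E) hp (NNReal.coe_pos.2 hε)
  refine ⟨C + 1, fun x y => ?_⟩
  have hreal : |‖x‖ ^ p - ‖x - y‖ ^ p - ‖y‖ ^ p| ≤ ε * ‖x‖ ^ p + (C + 1 : ℝ≥0) * ‖y‖ ^ p := by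
    have hxy := hC x (x - y)
    rw [_root_.sub_sub_cancel] at hxy
    calc |‖x‖ ^ p - ‖x - y‖ ^ p - ‖y‖ ^ p| ≤ |‖x‖ ^ p - ‖x - y‖ ^ p| + |‖y‖ ^ p| := abs_sub _ _
      _ ≤ ε * ‖x‖ ^ p + C * ‖y‖ ^ p + ‖y‖ ^ p :=
        add_le_add hxy (abs_of_nonneg (Real.rpow_nonneg (norm_nonneg _) p)).le
      _ = _ := by push_cast; ring
  have hofReal : ∀ z : E, ENNReal.ofReal (‖z‖ ^ p) = ‖z‖ₑ ^ p := fun z => by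
    rw [← ofReal_rpow_of_nonneg (norm_nonneg z) hp.le, ofReal_norm]
  calc ENNReal.ofReal |‖x‖ ^ p - ‖x - y‖ ^ p - ‖y‖ ^ p|
      ≤ ENNReal.ofReal (ε * ‖x‖ ^ p + (C + 1 : ℝ≥0) * ‖y‖ ^ p) := ofReal_le_ofReal hreal
    _ = _ := by
      rw [ofReal_add (by positivity) (by positivity), ofReal_mul NNReal.zero_le_coe,
        ofReal_mul NNReal.zero_le_coe, hofReal, hofReal, ofReal_coe_nnreal, ofReal_coe_nnreal]

end NormRpow

namespace MeasureTheory

variable {α : Type*} [MeasurableSpace α] {μ : Measure α}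

theorem tendsto_lintegral_zero_of_le_mul_add {g u : ℕ → α → ℝ≥0∞}
    (hg : ∀ n, AEMeasurable (g n) μ) (hu : ∀ n, AEMeasurable (u n) μ)
    (hu_bdd : limsup (fun n => ∫⁻ x, u n x ∂μ) atTop ≠ ∞)
    (hg_lim : ∀ᵐ x ∂μ, Tendsto (fun n => g n x) atTop (𝓝 0))
    (hdom : ∀ ε : ℝ≥0, 0 < ε → ∃ h : α → ℝ≥0∞, ∫⁻ x, h x ∂μ ≠ ∞ ∧
      ∀ n, ∀ᵐ x ∂μ, g n x ≤ ε * u n x + h x) :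
    Tendsto (fun n => ∫⁻ x, g n x ∂μ) atTop (𝓝 0) := by
  set L := limsup (fun n => ∫⁻ x, u n x ∂μ) atTop
  have hlimsup : ∀ ε : ℝ≥0, 0 < ε → limsup (fun n => ∫⁻ x, g n x ∂μ) atTop ≤ ε * L := by
    intro ε hε
    obtain ⟨h, hh, hgh⟩ := hdom ε hε
    have hmeas : ∀ n, AEMeasurable (fun x => g n x - ε * u n x) μ :=
      fun n => (hg n).sub ((hu n).const_mul _)
    -- the excess of `g n` over `ε * u n` is dominated by `h`
    have hexcess : Tendsto (fun n => ∫⁻ x, g n x - ε * u n x ∂μ) atTop (𝓝 0) := by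
      simpa using tendsto_lintegral_of_dominated_convergence' h hmeas
        (fun n => (hgh n).mono fun x hx => tsub_le_iff_left.2 hx) hh
        (hg_lim.mono fun x hx => tendsto_of_tendsto_of_tendsto_of_le_of_le tendsto_const_nhds hx
          (fun _ => zero_le) fun _ => tsub_le_self)
    have hsplit : ∀ n, ∫⁻ x, g n x ∂μ ≤ ∫⁻ x, g n x - ε * u n x ∂μ + ε * ∫⁻ x, u n x ∂μ := by
      intro n
      calc ∫⁻ x, g n x ∂μ ≤ ∫⁻ x, g n x - ε * u n x + ε * u n x ∂μ :=
            lintegral_mono fun x => le_tsub_add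
        _ = _ := by rw [lintegral_add_left' (hmeas n), lintegral_const_mul' _ _ coe_ne_top]
    calc limsup (fun n => ∫⁻ x, g n x ∂μ) atTop
        ≤ limsup (fun n => ∫⁻ x, g n x - ε * u n x ∂μ + ε * ∫⁻ x, u n x ∂μ) atTop :=
          limsup_le_limsup (Eventually.of_forall hsplit)
      _ = limsup (fun n => ε * ∫⁻ x, u n x ∂μ) atTop :=
          ENNReal.limsup_add_of_left_tendsto_zero hexcess _
      _ = ε * L := ENNReal.limsup_const_mul_of_ne_top coe_ne_top
  have hεL : Tendsto (fun ε : ℝ≥0 => (ε : ℝ≥0∞) * L) (𝓝[>] 0) (𝓝 0) := by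
    simpa using ENNReal.Tendsto.mul_const
      ((ENNReal.continuous_coe.tendsto 0).mono_left nhdsWithin_le_nhds) (Or.inr hu_bdd)
  exact tendsto_of_le_liminf_of_limsup_le zero_le
    (ge_of_tendsto hεL (eventually_nhdsWithin_of_forall hlimsup))

theorem lintegral_enorm_rpow_le_liminf_of_tendsto {E : Type*} [TopologicalSpace E]
    [ContinuousENorm E] {f : ℕ → α → E} {F : α → E} (p : ℝ)
    (hf : ∀ n, AEStronglyMeasurable (f n) μ)
    (hlim : ∀ᵐ x ∂μ, Tendsto (fun n => f n x) atTop (𝓝 (F x))) :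
    ∫⁻ x, ‖F x‖ₑ ^ p ∂μ ≤ liminf (fun n => ∫⁻ x, ‖f n x‖ₑ ^ p ∂μ) atTop :=
  lintegral_congr_ae (hlim.mono fun _ hx => (hx.enorm.ennrpow_const p).liminf_eq) ▸
    lintegral_liminf_le' fun n => (hf n).enorm.pow_const p

theorem tendsto_integral_brezis_lieb {E : Type*} [NormedAddCommGroup E] {p : ℝ} (hp : 0 < p)
    {f : ℕ → α → E} {F : α → E} (hf : ∀ n, AEStronglyMeasurable (f n) μ)
    (hbdd : limsup (fun n => ∫⁻ x, ‖f n x‖ₑ ^ p ∂μ) atTop ≠ ∞)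
    (hlim : ∀ᵐ x ∂μ, Tendsto (fun n => f n x) atTop (𝓝 (F x))) :
    Tendsto (fun n => ∫ x, |‖f n x‖ ^ p - ‖f n x - F x‖ ^ p - ‖F x‖ ^ p| ∂μ) atTop (𝓝 0) := by
  have hF : AEStronglyMeasurable F μ := aestronglyMeasurable_of_tendsto_ae atTop hf hlim
  set G : ℕ → α → ℝ := fun n x => |‖f n x‖ ^ p - ‖f n x - F x‖ ^ p - ‖F x‖ ^ p|
  have hG : ∀ n, AEStronglyMeasurable (G n) μ := fun n =>
    ((((hf n).norm.aemeasurable.pow_const p).sub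
      (((hf n).sub hF).norm.aemeasurable.pow_const p)).sub
        (hF.norm.aemeasurable.pow_const p)).norm.aestronglyMeasurable
  have hG_lim : ∀ᵐ x ∂μ, Tendsto (fun n => G n x) atTop (𝓝 0) := by
    filter_upwards [hlim] with x hx
    have hrpow : ∀ {a : ℕ → E} {b : E}, Tendsto a atTop (𝓝 b) →
        Tendsto (fun n => ‖a n‖ ^ p) atTop (𝓝 (‖b‖ ^ p)) :=
      fun ha => ha.norm.rpow_const (Or.inr hp.le)
    simpa [Real.zero_rpow hp.ne'] using
      (((hrpow hx).sub (hrpow (hx.sub_const (F x)))).sub_const (‖F x‖ ^ p)).abs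
  have hF_fin : ∫⁻ x, ‖F x‖ₑ ^ p ∂μ ≠ ∞ :=
    ((lintegral_enorm_rpow_le_liminf_of_tendsto p hf hlim).trans_lt
      ((liminf_le_limsup (by isBoundedDefault) (by isBoundedDefault)).trans_lt
        hbdd.lt_top)).ne
  have hdom : ∀ ε : ℝ≥0, 0 < ε → ∃ h : α → ℝ≥0∞, ∫⁻ x, h x ∂μ ≠ ∞ ∧
      ∀ n, ∀ᵐ x ∂μ, ENNReal.ofReal (G n x) ≤ ε * ‖f n x‖ₑ ^ p + h x := by
    intro ε hε
    obtain ⟨C, hC⟩ := exists_ofReal_abs_norm_rpow_sub_sub_le (E := E) hp hε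
    refine ⟨fun x => C * ‖F x‖ₑ ^ p, ?_, fun n => ae_of_all _ fun x => hC (f n x) (F x)⟩
    rw [lintegral_const_mul' _ _ coe_ne_top]
    exact mul_ne_top coe_ne_top hF_fin
  have hlint := tendsto_lintegral_zero_of_le_mul_add
    (fun n => (hG n).aemeasurable.ennreal_ofReal) (fun n => (hf n).enorm.pow_const p) hbdd
    (hG_lim.mono fun x hx => ofReal_zero ▸ (ENNReal.continuous_ofReal.tendsto 0).comp hx) hdom
  refine ((ENNReal.tendsto_toReal zero_ne_top).comp hlint).congr fun n => ?_
  exact (integral_eq_lintegral_of_nonneg_ae (ae_of_all _ fun x => abs_nonneg _) (hG n)).symm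

end MeasureTheory

/-- **Refined Fatou lemma (Brezis–Lieb)**: if `0 < p < ∞`, the `L^p` masses of the
`f n` stay bounded (their `limsup` is finite), and `f n → f` almost everywhere on `ℝ^d`,
then `∫ | |f n|^p − |f n − f|^p − |f|^p | → 0`. -/
theorem refined_fatou_brezis_lieb
    (d : ℕ) (p : ℝ) (hp : 0 < p)
    (f : ℕ → EuclideanSpace ℝ (Fin d) → ℂ) (F : EuclideanSpace ℝ (Fin d) → ℂ)
    (hmeas : ∀ n, Measurable (f n))
    (hbdd : Filter.limsup (fun n => ∫⁻ x, (‖f n x‖₊ : ℝ≥0∞) ^ p) Filter.atTop < ⊤)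
    (hae : ∀ᵐ x : EuclideanSpace ℝ (Fin d), Tendsto (fun n => f n x) atTop (nhds (F x))) :
    Tendsto (fun n => ∫ x : EuclideanSpace ℝ (Fin d),
        |‖f n x‖ ^ p - ‖f n x - F x‖ ^ p - ‖F x‖ ^ p|) atTop (nhds 0) :=
  tendsto_integral_brezis_lieb hp (fun n => (hmeas n).aestronglyMeasurable) hbdd.ne hae
end

section
/- Norm decoupling consequence of the Brezis–Lieb lemma: Let 0 < p < ∞ and let (f_n) be a sequence of measurable functions from ℝ^d to ℂ such that limsup_{n→∞} ∫_{ℝ^d} |f_n(x)|^p dx < ∞ and f_n → f almost everywhere on ℝ^d. Then ∫_{ℝ^d} |f_n(x)|^p dx − ∫_{ℝ^d} |f_n(x) − f(x)|^p dx → ∫_{ℝ^d} |f(x)|^p dx as n → ∞. -/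
/-!
For every `ε > 0` there is `C` with
`|‖a‖ ^ p - ‖a - b‖ ^ p - ‖b‖ ^ p| ≤ ε ‖a - b‖ ^ p + C ‖b‖ ^ p`.
Applied to `a = f n x`, `b = F x`, the positive part of
`|‖f n‖ ^ p - ‖f n - F‖ ^ p - ‖F‖ ^ p| - ε ‖f n - F‖ ^ p` is dominated by `C ‖F‖ ^ p` and tends to
`0` a.e., so its integral tends to `0` by dominated convergence, while `ε ∫ ‖f n - F‖ ^ p ≤ ε M`
for a uniform bound `M`. As `ε` is arbitrary, the defect tends to `0` in `L¹`. Fatou's lemma puts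
`F` in `Lᵖ`, which gives integrability of everything involved.
-/

open MeasureTheory Filter ENNReal

theorem Real.exists_add_rpow_le {p ε : ℝ} (hp : 0 < p) (hε : 0 < ε) :
    ∃ C, 0 ≤ C ∧ ∀ x y : ℝ, 0 ≤ x → 0 ≤ y → (x + y) ^ p ≤ (1 + ε) * x ^ p + C * y ^ p := by
  obtain ⟨s, hs, hsp⟩ : ∃ s : ℝ, 1 < s ∧ s ^ p = 1 + ε :=
    ⟨(1 + ε) ^ p⁻¹, Real.one_lt_rpow (by linarith) (inv_pos.2 hp), by
      rw [← Real.rpow_mul (by linarith), inv_mul_cancel₀ hp.ne', Real.rpow_one]⟩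
  obtain ⟨t, ht, hst⟩ : ∃ t : ℝ, 0 ≤ t ∧ t * (s - 1) = s :=
    ⟨s / (s - 1), div_nonneg (by linarith) (by linarith), div_mul_cancel₀ _ (by linarith)⟩
  refine ⟨t ^ p, Real.rpow_nonneg ht p, fun x y hx hy => ?_⟩
  -- `x + y ≤ s x` when `y ≤ (s - 1) x`, and `x + y ≤ t y` otherwise
  have hmax : x + y ≤ max (s * x) (t * y) := by
    rcases le_or_gt y ((s - 1) * x) with h | h
    · exact le_max_of_le_left (by linarith)
    · exact le_max_of_le_right (by nlinarith)
  have hsx : 0 ≤ (s * x) ^ p := Real.rpow_nonneg (by positivity) p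
  have hty : 0 ≤ (t * y) ^ p := Real.rpow_nonneg (by positivity) p
  calc (x + y) ^ p ≤ (max (s * x) (t * y)) ^ p := Real.rpow_le_rpow (by positivity) hmax hp.le
    _ ≤ (s * x) ^ p + (t * y) ^ p := by
        rcases max_cases (s * x) (t * y) with ⟨h, -⟩ | ⟨h, -⟩ <;> rw [h] <;> linarith
    _ = (1 + ε) * x ^ p + t ^ p * y ^ p := by
        rw [Real.mul_rpow (by linarith) hx, Real.mul_rpow ht hy, hsp]

section Pointwise

variable {E : Type*} [SeminormedAddCommGroup E] {p : ℝ}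

noncomputable def brezisLiebDefect (p : ℝ) (a b : E) : ℝ := ‖a‖ ^ p - ‖a - b‖ ^ p - ‖b‖ ^ p

noncomputable def brezisLiebExcess (p ε : ℝ) (a b : E) : ℝ :=
  max (|brezisLiebDefect p a b| - ε * ‖a - b‖ ^ p) 0

theorem exists_abs_brezisLiebDefect_le (hp : 0 < p) {ε : ℝ} (hε : 0 < ε) :
    ∃ C, 0 ≤ C ∧ ∀ a b : E, |brezisLiebDefect p a b| ≤ ε * ‖a - b‖ ^ p + C * ‖b‖ ^ p := by
  set ε' := min (ε / 2) 1
  have hε'0 : 0 < ε' := lt_min (half_pos hε) one_pos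
  have hε'ε : ε' ≤ ε / 2 := min_le_left _ _
  have hε'1 : ε' ≤ 1 := min_le_right _ _
  obtain ⟨C, hC, hadd⟩ := Real.exists_add_rpow_le hp hε'0
  refine ⟨2 * C + 1, by positivity, fun a b => ?_⟩
  have hnorm_rpow_le {x y z : E} (h : ‖x‖ ≤ ‖y‖ + ‖z‖) :
      ‖x‖ ^ p ≤ (1 + ε') * ‖y‖ ^ p + C * ‖z‖ ^ p :=
    (Real.rpow_le_rpow (norm_nonneg _) h hp.le).trans (hadd _ _ (norm_nonneg _) (norm_nonneg _))
  have hup := hnorm_rpow_le (norm_le_norm_sub_add a b)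
  have hlow := hnorm_rpow_le (norm_sub_le a b)
  have hb := Real.rpow_nonneg (norm_nonneg b) p
  have hab := Real.rpow_nonneg (norm_nonneg (a - b)) p
  rw [brezisLiebDefect, abs_le]
  -- the lower bound uses `hlow` and then `hup` inside it, with `ε' ≤ 1`
  constructor
  · nlinarith [mul_le_mul_of_nonneg_left hup hε'0.le,
      mul_nonneg (mul_nonneg hε'0.le hab) (sub_nonneg.2 hε'1),
      mul_nonneg (sub_nonneg.2 hε'1) (mul_nonneg hC hb)]
  · nlinarith

theorem continuous_brezisLiebExcess (hp : 0 ≤ p) (ε : ℝ) :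
    Continuous fun z : E × E => brezisLiebExcess p ε z.1 z.2 := by
  unfold brezisLiebExcess brezisLiebDefect
  fun_prop (disch := exact Or.inr hp)

theorem brezisLiebExcess_self (hp : 0 < p) (ε : ℝ) (b : E) : brezisLiebExcess p ε b b = 0 := by
  simp [brezisLiebExcess, brezisLiebDefect, Real.zero_rpow hp.ne']

theorem norm_brezisLiebExcess_le {ε C : ℝ} (hC : 0 ≤ C)
    (hdefect : ∀ a b : E, |brezisLiebDefect p a b| ≤ ε * ‖a - b‖ ^ p + C * ‖b‖ ^ p) (a b : E) :
    ‖brezisLiebExcess p ε a b‖ ≤ C * ‖b‖ ^ p := by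
  rw [brezisLiebExcess, Real.norm_of_nonneg (le_max_right _ _)]
  exact max_le (by linarith [hdefect a b]) (by positivity)

end Pointwise

section Integral

variable {α E : Type*} [MeasurableSpace α] {μ : Measure α} [NormedAddCommGroup E] {p : ℝ}
  {f : ℕ → α → E} {F : α → E}

theorem integrable_norm_rpow_of_lintegral_lt_top (hp : 0 < p) {g : α → E}
    (hg : AEStronglyMeasurable g μ) (h : ∫⁻ x, ‖g x‖ₑ ^ p ∂μ < ∞) :
    Integrable (fun x => ‖g x‖ ^ p) μ := by
  have hp' : ENNReal.ofReal p ≠ 0 := (ENNReal.ofReal_pos.2 hp).ne'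
  have := (integrable_norm_rpow_iff hg hp' ofReal_ne_top).2
    ⟨hg, (eLpNorm_lt_top_iff_lintegral_rpow_enorm_lt_top hp' ofReal_ne_top).2
      (by rwa [toReal_ofReal hp.le])⟩
  rwa [toReal_ofReal hp.le] at this

theorem integral_norm_rpow_eq_toReal_lintegral (hp : 0 ≤ p) {g : α → E}
    (hg : AEStronglyMeasurable g μ) :
    ∫ x, ‖g x‖ ^ p ∂μ = (∫⁻ x, ‖g x‖ₑ ^ p ∂μ).toReal := by
  rw [integral_eq_lintegral_of_nonneg_ae (ae_of_all _ fun x => by positivity)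
    (by fun_prop (disch := exact Or.inr hp))]
  congr 1
  refine lintegral_congr fun x => ?_
  rw [← ofReal_rpow_of_nonneg (norm_nonneg _) hp, ofReal_norm]

theorem lintegral_enorm_rpow_le_liminf_of_tendsto_ae (hf : ∀ n, AEStronglyMeasurable (f n) μ)
    (hae : ∀ᵐ x ∂μ, Tendsto (fun n => f n x) atTop (nhds (F x))) :
    ∫⁻ x, ‖F x‖ₑ ^ p ∂μ ≤ liminf (fun n => ∫⁻ x, ‖f n x‖ₑ ^ p ∂μ) atTop :=
  calc ∫⁻ x, ‖F x‖ₑ ^ p ∂μ = ∫⁻ x, liminf (fun n => ‖f n x‖ₑ ^ p) atTop ∂μ :=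
        lintegral_congr_ae <| hae.mono fun x hx =>
          ((ENNReal.continuous_rpow_const.tendsto _).comp
            ((continuous_enorm.tendsto _).comp hx)).liminf_eq.symm
    _ ≤ _ := lintegral_liminf_le' fun n => by fun_prop

theorem tendsto_integral_brezisLiebExcess (hp : 0 < p) {ε C : ℝ} (hC : 0 ≤ C)
    (hdefect : ∀ a b : E, |brezisLiebDefect p a b| ≤ ε * ‖a - b‖ ^ p + C * ‖b‖ ^ p)
    (hf : ∀ n, AEStronglyMeasurable (f n) μ) (hF : AEStronglyMeasurable F μ)
    (hae : ∀ᵐ x ∂μ, Tendsto (fun n => f n x) atTop (nhds (F x)))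
    (hFint : Integrable (fun x => ‖F x‖ ^ p) μ) :
    Tendsto (fun n => ∫ x, brezisLiebExcess p ε (f n x) (F x) ∂μ) atTop (nhds 0) := by
  have hcont := continuous_brezisLiebExcess (E := E) hp.le ε
  simpa using tendsto_integral_of_dominated_convergence (f := fun _ => 0) _
    (fun n => hcont.comp_aestronglyMeasurable₂ (hf n) hF) (hFint.const_mul C)
    (fun n => ae_of_all _ fun x => norm_brezisLiebExcess_le hC hdefect _ _)
    (hae.mono fun x hx => by
      simpa [Function.comp_def, brezisLiebExcess_self hp] using
        (hcont.tendsto (F x, F x)).comp (hx.prodMk_nhds tendsto_const_nhds))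

/-- The **Brezis–Lieb lemma**. -/
theorem tendsto_integral_abs_brezisLiebDefect (hp : 0 < p) {M : ℝ}
    (hf : ∀ n, AEStronglyMeasurable (f n) μ) (hF : AEStronglyMeasurable F μ)
    (hae : ∀ᵐ x ∂μ, Tendsto (fun n => f n x) atTop (nhds (F x)))
    (hFint : Integrable (fun x => ‖F x‖ ^ p) μ)
    (hint : ∀ᶠ n in atTop, Integrable (fun x => ‖f n x - F x‖ ^ p) μ)
    (hM : ∀ᶠ n in atTop, ∫ x, ‖f n x - F x‖ ^ p ∂μ ≤ M) :
    Tendsto (fun n => ∫ x, |brezisLiebDefect p (f n x) (F x)| ∂μ) atTop (nhds 0) := by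
  refine tendsto_order.2 ⟨fun a ha => Eventually.of_forall fun _ =>
    ha.trans_le (integral_nonneg fun _ => abs_nonneg _), fun δ hδ => ?_⟩
  obtain ⟨ε, hε, hεM⟩ : ∃ ε > 0, ε * M < δ / 2 := by
    refine ⟨δ / (2 * (|M| + 1)), by positivity, ?_⟩
    rw [div_mul_eq_mul_div, div_lt_div_iff₀ (by positivity) two_pos]
    nlinarith [le_abs_self M, abs_nonneg M]
  obtain ⟨C, hC, hdefect⟩ := exists_abs_brezisLiebDefect_le (E := E) hp hε
  have hexcess_lim := tendsto_integral_brezisLiebExcess hp hC hdefect hf hF hae hFint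
  filter_upwards [hexcess_lim.eventually_lt_const (half_pos hδ), hint, hM]
    with n hexcess hintn hMn
  have hexcess_int : Integrable (fun x => brezisLiebExcess p ε (f n x) (F x)) μ :=
    (hFint.const_mul C).mono'
      ((continuous_brezisLiebExcess hp.le ε).comp_aestronglyMeasurable₂ (hf n) hF)
      (ae_of_all _ fun x => norm_brezisLiebExcess_le hC hdefect _ _)
  calc ∫ x, |brezisLiebDefect p (f n x) (F x)| ∂μ
      ≤ ∫ x, (brezisLiebExcess p ε (f n x) (F x) + ε * ‖f n x - F x‖ ^ p) ∂μ :=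
        integral_mono_of_nonneg (ae_of_all _ fun _ => abs_nonneg _)
          (hexcess_int.add (hintn.const_mul ε))
          (ae_of_all _ fun _ => sub_le_iff_le_add.1 (le_max_left _ _))
    _ = ∫ x, brezisLiebExcess p ε (f n x) (F x) ∂μ + ε * ∫ x, ‖f n x - F x‖ ^ p ∂μ := by
        rw [integral_add hexcess_int (hintn.const_mul ε), integral_const_mul]
    _ < δ / 2 + δ / 2 :=
        add_lt_add_of_lt_of_le hexcess ((mul_le_mul_of_nonneg_left hMn hε.le).trans hεM.le)
    _ = δ := add_halves δ

theorem tendsto_integral_norm_rpow_sub_integral_norm_sub_rpow (hp : 0 < p) {M : ℝ}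
    (hf : ∀ n, AEStronglyMeasurable (f n) μ)
    (hae : ∀ᵐ x ∂μ, Tendsto (fun n => f n x) atTop (nhds (F x)))
    (hFint : Integrable (fun x => ‖F x‖ ^ p) μ)
    (hint : ∀ᶠ n in atTop, Integrable (fun x => ‖f n x‖ ^ p) μ)
    (hM : ∀ᶠ n in atTop, ∫ x, ‖f n x‖ ^ p ∂μ ≤ M) :
    Tendsto (fun n => ∫ x, ‖f n x‖ ^ p ∂μ - ∫ x, ‖f n x - F x‖ ^ p ∂μ) atTop
      (nhds (∫ x, ‖F x‖ ^ p ∂μ)) := by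
  have hF := aestronglyMeasurable_of_tendsto_ae _ hf hae
  obtain ⟨C, -, hadd⟩ := Real.exists_add_rpow_le hp one_pos
  have hsub (n : ℕ) (x : α) : ‖f n x - F x‖ ^ p ≤ 2 * ‖f n x‖ ^ p + C * ‖F x‖ ^ p := by
    have := hadd _ _ (norm_nonneg (f n x)) (norm_nonneg (F x))
    rw [one_add_one_eq_two] at this
    exact (Real.rpow_le_rpow (norm_nonneg _) (norm_sub_le _ _) hp.le).trans this
  have hint_sub : ∀ᶠ n in atTop, Integrable (fun x => ‖f n x - F x‖ ^ p) μ :=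
    hint.mono fun n hn => by
      have := hf n
      refine ((hn.const_mul 2).add (hFint.const_mul C)).mono'
        (by fun_prop (disch := exact hp.le)) (ae_of_all _ fun x => ?_)
      rw [Real.norm_of_nonneg (by positivity)]
      exact hsub n x
  have hM_sub : ∀ᶠ n in atTop, ∫ x, ‖f n x - F x‖ ^ p ∂μ ≤ 2 * M + C * ∫ x, ‖F x‖ ^ p ∂μ := by
    filter_upwards [hint, hint_sub, hM] with n hn hn_sub hMn
    calc ∫ x, ‖f n x - F x‖ ^ p ∂μ ≤ ∫ x, (2 * ‖f n x‖ ^ p + C * ‖F x‖ ^ p) ∂μ :=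
          integral_mono hn_sub ((hn.const_mul 2).add (hFint.const_mul C)) (hsub n)
      _ ≤ 2 * M + C * ∫ x, ‖F x‖ ^ p ∂μ := by
          rw [integral_add (hn.const_mul 2) (hFint.const_mul C), integral_const_mul,
            integral_const_mul]
          linarith
  rw [← tendsto_sub_nhds_zero_iff]
  refine squeeze_zero_norm' ?_
    (tendsto_integral_abs_brezisLiebDefect hp hf hF hae hFint hint_sub hM_sub)
  filter_upwards [hint, hint_sub] with n hn hn_sub
  have hdefect : ∫ x, brezisLiebDefect p (f n x) (F x) ∂μ
      = ∫ x, ‖f n x‖ ^ p ∂μ - ∫ x, ‖f n x - F x‖ ^ p ∂μ - ∫ x, ‖F x‖ ^ p ∂μ := by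
    simp only [brezisLiebDefect]
    rw [integral_sub (f := fun x => ‖f n x‖ ^ p - ‖f n x - F x‖ ^ p) (hn.sub hn_sub) hFint,
      integral_sub hn hn_sub]
  rw [← hdefect]
  exact norm_integral_le_integral_norm _

end Integral

/-- **Norm decoupling consequence of the Brezis–Lieb lemma**: if `0 < p < ∞`, the `L^p`
masses of the `f n` stay bounded (their `limsup` is finite), and `f n → f` almost
everywhere on `ℝ^d`, then `∫ |f n|^p − ∫ |f n − f|^p → ∫ |f|^p`. -/
theorem brezis_lieb_norm_decoupling
    (d : ℕ) (p : ℝ) (hp : 0 < p)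
    (f : ℕ → EuclideanSpace ℝ (Fin d) → ℂ) (F : EuclideanSpace ℝ (Fin d) → ℂ)
    (hmeas : ∀ n, Measurable (f n))
    (hbdd : Filter.limsup (fun n => ∫⁻ x, (‖f n x‖₊ : ℝ≥0∞) ^ p) Filter.atTop < ⊤)
    (hae : ∀ᵐ x : EuclideanSpace ℝ (Fin d), Tendsto (fun n => f n x) atTop (nhds (F x))) :
    Tendsto (fun n => (∫ x : EuclideanSpace ℝ (Fin d), ‖f n x‖ ^ p)
        - ∫ x : EuclideanSpace ℝ (Fin d), ‖f n x - F x‖ ^ p) atTop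
      (nhds (∫ x : EuclideanSpace ℝ (Fin d), ‖F x‖ ^ p)) := by
  have hf : ∀ n, AEStronglyMeasurable (f n) volume := fun n => (hmeas n).aestronglyMeasurable
  have hF := aestronglyMeasurable_of_tendsto_ae _ hf hae
  have hFfin : ∫⁻ x, ‖F x‖ₑ ^ p < ⊤ :=
    (lintegral_enorm_rpow_le_liminf_of_tendsto_ae hf hae).trans_lt
      (lt_of_le_of_lt liminf_le_limsup hbdd)
  obtain ⟨K, hK, hK_top⟩ := exists_between hbdd
  have hfK : ∀ᶠ n in atTop, ∫⁻ x, ‖f n x‖ₑ ^ p < K := eventually_lt_of_limsup_lt hK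
  refine tendsto_integral_norm_rpow_sub_integral_norm_sub_rpow hp hf hae
    (integrable_norm_rpow_of_lintegral_lt_top hp hF hFfin)
    (hfK.mono fun n hn => integrable_norm_rpow_of_lintegral_lt_top hp (hf n) (hn.trans hK_top))
    (M := K.toReal) (hfK.mono fun n hn => ?_)
  rw [integral_norm_rpow_eq_toReal_lintegral hp.le (hf n)]
  exact toReal_mono hK_top.ne hn.le
end

section
/- Pohozaev identities: Let Q : ℝ³ → ℝ be a Schwartz function satisfying ΔQ(x) + Q(x)³ = Q(x) for every x ∈ ℝ³, where ΔQ = ∑_{j=1}^3 ∂²Q/∂x_j². Then ∫_{ℝ³} Q(x)² dx = (1/4) ∫_{ℝ³} Q(x)⁴ dx and ∫_{ℝ³} Q(x)² dx = (1/3) ∫_{ℝ³} ‖∇Q(x)‖² dx. -/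
/-!
Pohozaev's argument. Testing `ΔQ = Q - Q³` against `Q` and integrating by parts gives
`-∫ ‖∇Q‖² = ∫ Q² - ∫ Q⁴`. Testing it against the generator of dilations `x · ∇Q` uses
`∫ x · ∇g = -n ∫ g` (for `g = Q²`, `Q⁴`, `(∂ᵢQ)²`) and gives
`(n - 2)/2 ∫ ‖∇Q‖² = -n/2 ∫ Q² + n/4 ∫ Q⁴`. For `n = 3` the two linear relations force
`∫ Q⁴ = 4 ∫ Q²` and `∫ ‖∇Q‖² = 3 ∫ Q²`.
-/

open MeasureTheory

noncomputable def laplacianR3 (f : EuclideanSpace ℝ (Fin 3) → ℝ)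
    (x : EuclideanSpace ℝ (Fin 3)) : ℝ :=
  ∑ j : Fin 3,
    fderiv ℝ (fun y => fderiv ℝ f y (EuclideanSpace.single j 1)) x (EuclideanSpace.single j 1)

open SchwartzMap LineDeriv Laplacian
open scoped RealInnerProductSpace

theorem OrthonormalBasis.sum_sq_fderiv_apply_eq_norm_gradient_sq {ι E : Type*} [Fintype ι]
    [NormedAddCommGroup E] [InnerProductSpace ℝ E] [CompleteSpace E]
    (b : OrthonormalBasis ι ℝ E) (f : E → ℝ) (x : E) :
    ∑ i, fderiv ℝ f x (b i) ^ 2 = ‖gradient f x‖ ^ 2 := by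
  rw [← b.sum_sq_norm_inner_left (gradient f x)]
  simp [gradient, InnerProductSpace.toDual_symm_apply]

namespace SchwartzMap

section Euler

variable {E F : Type*} [NormedAddCommGroup E] [NormedSpace ℝ E]
  [NormedAddCommGroup F] [NormedSpace ℝ F]

noncomputable def euler : 𝓢(E, F) →L[ℝ] 𝓢(E, F) :=
  (bilinLeftCLM (.id ℝ (E →L[ℝ] F)) Function.HasTemperateGrowth.id').comp (fderivCLM ℝ E F)

theorem euler_apply (f : 𝓢(E, F)) (x : E) : euler f x = fderiv ℝ f x x := rfl

theorem isSymmSndFDerivAt (f : 𝓢(E, F)) (x : E) : IsSymmSndFDerivAt ℝ f x :=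
  (f.smooth 2).contDiffAt.isSymmSndFDerivAt (by simp)

theorem lineDerivOp_euler (v : E) (f : 𝓢(E, F)) :
    ∂_{v} (euler f) = euler (∂_{v} f) + ∂_{v} f := by
  ext x
  have hDf : DifferentiableAt ℝ (fderiv ℝ f) x :=
    ((f.smooth 2).fderiv_right (m := 1) (by norm_num)).differentiable (by simp) x
  have hc : ⇑(∂_{v} f : 𝓢(E, F)) = fun y => fderiv ℝ f y v :=
    funext fun y => lineDerivOp_apply_eq_fderiv v f y
  rw [add_apply, euler_apply, lineDerivOp_apply_eq_fderiv, lineDerivOp_apply_eq_fderiv, hc,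
    show (⇑(euler f)) = fun y => fderiv ℝ f y y from rfl,
    fderiv_clm_apply (u := fun y => y) hDf differentiableAt_fun_id,
    fderiv_clm_apply hDf (differentiableAt_const v)]
  simp [f.isSymmSndFDerivAt x v x, add_comm]

/-- `f ^ (m + 1)`: the offset is there because `f ^ 0 = 1` is not a Schwartz function. -/
noncomputable def powSucc (f : 𝓢(E, ℝ)) : ℕ → 𝓢(E, ℝ)
  | 0 => f
  | m + 1 => pairing (.mul ℝ ℝ) (powSucc f m) f

@[simp]
theorem powSucc_apply (f : 𝓢(E, ℝ)) (m : ℕ) (x : E) : powSucc f m x = f x ^ (m + 1) := by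
  induction m with
  | zero => simp [powSucc]
  | succ m ih => simp [powSucc, ih, pow_succ]

theorem euler_powSucc_apply (f : 𝓢(E, ℝ)) (m : ℕ) (x : E) :
    euler (powSucc f m) x = (m + 1) * f x ^ m * euler f x := by
  have hcoe : ⇑(powSucc f m) = fun y => f y ^ (m + 1) := funext (powSucc_apply f m)
  rw [euler_apply, euler_apply, hcoe, fderiv_fun_pow _ f.differentiableAt]
  simp [mul_assoc]

end Euler

section Integral

variable {E F : Type*} [NormedAddCommGroup E] [InnerProductSpace ℝ E] [FiniteDimensional ℝ E]
  [MeasurableSpace E] [BorelSpace E] {μ : Measure E} [μ.IsAddHaarMeasure]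
  [NormedAddCommGroup F] [NormedSpace ℝ F]

theorem integrable_inner_smul (v : E) (g : 𝓢(E, F)) :
    Integrable (fun x => ⟪v, x⟫ • g x) μ := by
  have hv : (fun x : E => ⟪v, x⟫).HasTemperateGrowth := (innerSL ℝ v).hasTemperateGrowth
  simpa [smulLeftCLM_apply hv] using
    (smulLeftCLM F (fun x : E => ⟪v, x⟫) g).integrable (μ := μ)

theorem integral_inner_smul_lineDerivOp (g : 𝓢(E, F)) {v : E} (hv : ‖v‖ = 1) :
    ∫ x, ⟪v, x⟫ • ∂_{v} g x ∂μ = -∫ x, g x ∂μ := by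
  have hparts := integral_bilinear_hasLineDerivAt_right_eq_neg_left_of_integrable
    (μ := μ) (f := fun x : E => ⟪v, x⟫) (f' := fun _ => 1) (g := g) (g' := fun x => ∂_{v} g x)
    (B := ContinuousLinearMap.lsmul ℝ ℝ) (v := v) ?_ (integrable_inner_smul v _)
    (integrable_inner_smul v g) ?_ ?_
  · simpa using hparts
  · simpa using g.integrable
  · intro x _
    have := ((innerSL ℝ v).hasFDerivAt (x := x)).hasLineDerivAt v
    simpa [real_inner_self_eq_norm_sq, hv] using this
  · exact fun x _ => (g.hasFDerivAt x).hasLineDerivAt v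

theorem integral_euler (g : 𝓢(E, F)) :
    ∫ x, euler g x ∂μ = -(Module.finrank ℝ E : ℝ) • ∫ x, g x ∂μ := by
  let b := stdOrthonormalBasis ℝ E
  have hsum : ∀ x, euler g x = ∑ i, ⟪b i, x⟫ • ∂_{b i} g x := fun x => by
    calc euler g x = fderiv ℝ g x (∑ i, ⟪b i, x⟫ • b i) := by rw [b.sum_repr', euler_apply]
      _ = _ := by simp [lineDerivOp_apply_eq_fderiv]
  simp_rw [hsum]
  rw [integral_finsetSum _ fun i _ => integrable_inner_smul _ _]
  simp [integral_inner_smul_lineDerivOp g (b.orthonormal.1 _), Nat.cast_smul_eq_nsmul]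

theorem integrable_pow (f : 𝓢(E, ℝ)) {m : ℕ} (hm : m ≠ 0) :
    Integrable (fun x => f x ^ m) μ := by
  obtain ⟨m, rfl⟩ := Nat.exists_eq_succ_of_ne_zero hm
  exact (powSucc f m).integrable.congr (.of_forall (powSucc_apply f m))

theorem integrable_mul (f g : 𝓢(E, ℝ)) : Integrable (fun x => f x * g x) μ :=
  (pairing (.mul ℝ ℝ) f g).integrable

theorem integrable_apply_pow_mul (f g : 𝓢(E, ℝ)) (m : ℕ) :
    Integrable (fun x => f x ^ m * g x) μ := by
  cases m with
  | zero => simpa using g.integrable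
  | succ m => exact (integrable_mul (powSucc f m) g).congr (.of_forall fun x => by simp)

theorem integral_pow_mul_euler (f : 𝓢(E, ℝ)) (m : ℕ) :
    (m + 1) * ∫ x, f x ^ m * euler f x ∂μ = -Module.finrank ℝ E * ∫ x, f x ^ (m + 1) ∂μ := by
  simpa [euler_powSucc_apply, integral_const_mul, mul_assoc] using
    integral_euler (μ := μ) (powSucc f m)

theorem integral_euler_mul_lineDerivOp_lineDerivOp (f : 𝓢(E, ℝ)) (v : E) :
    ∫ x, euler f x * ∂_{v} (∂_{v} f) x ∂μ
      = (Module.finrank ℝ E - 2) / 2 * ∫ x, ∂_{v} f x ^ 2 ∂μ := by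
  have hparts : ∫ x, euler f x * ∂_{v} (∂_{v} f) x ∂μ
      = -(∫ x, ∂_{v} f x ^ 1 * euler (∂_{v} f) x ∂μ + ∫ x, ∂_{v} f x ^ 2 ∂μ) := by
    rw [integral_mul_lineDerivOp_right_eq_neg_left, lineDerivOp_euler,
      ← integral_add (integrable_apply_pow_mul _ _ 1) (integrable_pow _ two_ne_zero)]
    congr 1
    exact integral_congr_ae (.of_forall fun x => by simp only [add_apply]; ring)
  have hEuler := integral_pow_mul_euler (μ := μ) (∂_{v} f) 1
  push_cast at hEuler
  rw [hparts]
  linear_combination (-1 / 2 : ℝ) * hEuler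

theorem integral_sum_sq_lineDerivOp {ι : Type*} [Fintype ι] (b : OrthonormalBasis ι ℝ E)
    (f : 𝓢(E, ℝ)) : ∑ i, ∫ x, ∂_{b i} f x ^ 2 ∂μ = ∫ x, ‖gradient f x‖ ^ 2 ∂μ := by
  rw [← integral_finsetSum _ fun i _ => integrable_pow _ two_ne_zero]
  simp_rw [lineDerivOp_apply_eq_fderiv, b.sum_sq_fderiv_apply_eq_norm_gradient_sq]

theorem integral_mul_laplacian_self (f : 𝓢(E, ℝ)) :
    ∫ x, f x * Δ f x ∂μ = -∫ x, ‖gradient f x‖ ^ 2 ∂μ := by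
  let b := stdOrthonormalBasis ℝ E
  simp_rw [laplacian_eq_sum b, sum_apply, Finset.mul_sum]
  rw [integral_finsetSum _ fun i _ => integrable_mul _ _, ← integral_sum_sq_lineDerivOp b,
    ← Finset.sum_neg_distrib]
  refine Finset.sum_congr rfl fun i _ => ?_
  rw [integral_mul_lineDerivOp_right_eq_neg_left]
  simp_rw [sq]

theorem integral_euler_mul_laplacian (f : 𝓢(E, ℝ)) :
    ∫ x, euler f x * Δ f x ∂μ
      = (Module.finrank ℝ E - 2) / 2 * ∫ x, ‖gradient f x‖ ^ 2 ∂μ := by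
  let b := stdOrthonormalBasis ℝ E
  simp_rw [laplacian_eq_sum b, sum_apply, Finset.mul_sum]
  rw [integral_finsetSum _ fun i _ => integrable_mul _ _, ← integral_sum_sq_lineDerivOp b,
    Finset.mul_sum]
  exact Finset.sum_congr rfl fun i _ => integral_euler_mul_lineDerivOp_lineDerivOp f (b i)

end Integral

end SchwartzMap

theorem laplacianR3_eq_laplacian (f : 𝓢(EuclideanSpace ℝ (Fin 3), ℝ))
    (x : EuclideanSpace ℝ (Fin 3)) : laplacianR3 f x = Δ f x := by
  have hcoe (v : EuclideanSpace ℝ (Fin 3)) :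
      ⇑(∂_{v} f : 𝓢(EuclideanSpace ℝ (Fin 3), ℝ)) = fun y => fderiv ℝ f y v :=
    funext fun y => lineDerivOp_apply_eq_fderiv v f y
  simp [laplacianR3, laplacian_eq_sum (EuclideanSpace.basisFun (Fin 3) ℝ), sum_apply,
    lineDerivOp_apply_eq_fderiv, hcoe]

/-- **Pohozaev identities**: if `Q` is a real-valued Schwartz function on `ℝ³` solving
`ΔQ + Q³ = Q`, then `∫ Q² = (1/4) ∫ Q⁴` and `∫ Q² = (1/3) ∫ ‖∇Q‖²`. -/
theorem pohozaev_identities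
    (Q : SchwartzMap (EuclideanSpace ℝ (Fin 3)) ℝ)
    (hQ : ∀ x : EuclideanSpace ℝ (Fin 3), laplacianR3 (⇑Q) x + (Q x) ^ 3 = Q x) :
    (∫ x : EuclideanSpace ℝ (Fin 3), (Q x) ^ 2)
      = (1/4) * (∫ x : EuclideanSpace ℝ (Fin 3), (Q x) ^ 4)
    ∧ (∫ x : EuclideanSpace ℝ (Fin 3), (Q x) ^ 2)
      = (1/3) * ∫ x : EuclideanSpace ℝ (Fin 3), ‖gradient (⇑Q) x‖ ^ 2 := by
  have hΔ (x) : Δ Q x = Q x - Q x ^ 3 := by linarith [hQ x, laplacianR3_eq_laplacian Q x]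
  have energy : (∫ x, Q x ^ 2) - ∫ x, Q x ^ 4 = -∫ x, ‖gradient Q x‖ ^ 2 := by
    rw [← integral_mul_laplacian_self,
      ← integral_sub (integrable_pow Q two_ne_zero) (integrable_pow Q four_ne_zero)]
    exact integral_congr_ae (.of_forall fun x => by simp only [hΔ]; ring)
  have pohozaev : (∫ x, Q x * euler Q x) - ∫ x, Q x ^ 3 * euler Q x
      = 1 / 2 * ∫ x, ‖gradient Q x‖ ^ 2 := by
    calc _ = ∫ x, euler Q x * Δ Q x := by
          rw [← integral_sub (integrable_mul Q (euler Q))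
            (integrable_apply_pow_mul Q (euler Q) 3)]
          exact integral_congr_ae (.of_forall fun x => by simp only [hΔ]; ring)
      _ = _ := by rw [integral_euler_mul_laplacian, finrank_euclideanSpace_fin]; norm_num
  have hQ2 := integral_pow_mul_euler (μ := volume) Q 1
  have hQ4 := integral_pow_mul_euler (μ := volume) Q 3
  rw [finrank_euclideanSpace_fin] at hQ2 hQ4
  norm_num at hQ2 hQ4
  constructor <;> linarith
end
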